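/- arXiv:0901.2070 — 7 statements merged into one kernel-verified Lean document; each statement's English description precedes it below -/
import Mathlib

section
/- For every y > 0, the supremum defining the convex dual is attained at the point min(I(y), H); that is, Ũ(y) = U(min(I(y), H)) − y·min(I(y), H). -/
open MeasureTheory Set Filter
open scoped ENNReal NNReal Topology

/-- The convex dual `Ũ(y) := sup_{0 ≤ z ≤ H} (U(z) − y·z)`. -/
noncomputable def dualU (U : ℝ → ℝ) (H y : ℝ) : ℝ :=
  sSup ((fun z => U z - y * z) '' Set.Icc 0 H)

/-- `min(I(y), H)`, where `I(y) := inf{ z ∈ (0,H) : U'(z) < y }` with the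
convention `inf ∅ = +∞` (so that `min(I(y), H) = H` when the set is empty). -/
noncomputable def IminU (U : ℝ → ℝ) (H y : ℝ) : ℝ :=
  sInf ({z | z ∈ Set.Ioo 0 H ∧ deriv U z < y} ∪ {H})

/-- For every `y > 0`, the supremum defining the convex dual is attained at
`min(I(y), H)`: `Ũ(y) = U(min(I(y), H)) − y·min(I(y), H)`. -/
theorem stmt0 (H : ℝ) (hH : 0 < H) (U : ℝ → ℝ)
    (hU0 : ∀ z, 0 ≤ z → 0 ≤ U z)
    (hmono : MonotoneOn U (Set.Ici 0))
    (hcont : ContinuousOn U (Set.Ici 0))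
    (hconc : StrictConcaveOn ℝ (Set.Ioo 0 H) U)
    (hdiff : ∀ z ∈ Set.Ioo 0 H, DifferentiableAt ℝ U z)
    (hcap : ∀ w, 0 ≤ w → U w = U (min w H)) :
    ∀ y, 0 < y → dualU U H y = U (IminU U H y) - y * IminU U H y := by
  intro y hy
  set f : ℝ → ℝ := fun z => U z - y * z with hf
  set T : Set ℝ := {z | z ∈ Set.Ioo 0 H ∧ deriv U z < y} ∪ {H} with hT
  set x : ℝ := sInf T with hxdef
  have hTne : T.Nonempty := ⟨H, Or.inr rfl⟩
  have hTbdd : BddBelow T := by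
    refine ⟨0, fun z hz => ?_⟩
    rcases hz with ⟨⟨h1, _⟩, _⟩ | h
    · exact h1.le
    · simp only [Set.mem_singleton_iff] at h; simp [h, hH.le]
  have hx0 : 0 ≤ x := le_csInf hTne (fun z hz => by
    rcases hz with ⟨⟨h1, _⟩, _⟩ | h
    · exact h1.le
    · simp only [Set.mem_singleton_iff] at h; simp [h, hH.le])
  have hxH : x ≤ H := csInf_le hTbdd (Or.inr rfl)
  -- derivative of U strictly antitone on (0,H)
  have hanti : StrictAntiOn (deriv U) (Set.Ioo 0 H) :=
    hconc.strictAntiOn_deriv hdiff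
  -- continuity of f on Icc 0 H
  have hfc : ContinuousOn f (Set.Icc 0 H) := by
    apply ContinuousOn.sub (hcont.mono (Set.Icc_subset_Ici_self))
    exact (continuous_const.mul continuous_id).continuousOn
  -- derivative of f
  have hfd : ∀ z ∈ Set.Ioo 0 H, HasDerivAt f (deriv U z - y) z := by
    intro z hz
    have h1 := (hdiff z hz).hasDerivAt
    have h2 : HasDerivAt (fun w : ℝ => y * w) y z := by
      simpa using (hasDerivAt_id z).const_mul y
    exact h1.sub h2
  -- f monotone on [0, x]
  have hmonof : MonotoneOn f (Set.Icc 0 x) := by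
    apply monotoneOn_of_deriv_nonneg (convex_Icc 0 x)
      (hfc.mono (Set.Icc_subset_Icc le_rfl hxH))
    · intro z hz
      rw [interior_Icc] at hz
      have hzH : z ∈ Set.Ioo 0 H := ⟨hz.1, lt_of_lt_of_le hz.2 hxH⟩
      exact ((hfd z hzH).differentiableAt).differentiableWithinAt
    · intro z hz
      rw [interior_Icc] at hz
      have hzH : z ∈ Set.Ioo 0 H := ⟨hz.1, lt_of_lt_of_le hz.2 hxH⟩
      rw [(hfd z hzH).deriv]
      have : z ∉ T := fun hmem => absurd (csInf_le hTbdd hmem) (not_le.mpr hz.2)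
      have hge : y ≤ deriv U z := by
        by_contra h
        exact this (Or.inl ⟨hzH, not_le.mp h⟩)
      linarith
  -- f antitone on [x, H]
  have hantif : AntitoneOn f (Set.Icc x H) := by
    apply antitoneOn_of_deriv_nonpos (convex_Icc x H)
      (hfc.mono (Set.Icc_subset_Icc hx0 le_rfl))
    · intro z hz
      rw [interior_Icc] at hz
      have hzH : z ∈ Set.Ioo 0 H := ⟨lt_of_le_of_lt hx0 hz.1, hz.2⟩
      exact ((hfd z hzH).differentiableAt).differentiableWithinAt
    · intro z hz
      rw [interior_Icc] at hz
      have hzH : z ∈ Set.Ioo 0 H := ⟨lt_of_le_of_lt hx0 hz.1, hz.2⟩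
      rw [(hfd z hzH).deriv]
      obtain ⟨s, hs, hsz⟩ := exists_lt_of_csInf_lt hTne hz.1
      rcases hs with ⟨hs1, hs2⟩ | h
      · have := hanti hs1 hzH hsz
        linarith
      · simp only [Set.mem_singleton_iff] at h
        exact absurd (h ▸ hsz) (not_lt.mpr hz.2.le)
  -- f z ≤ f x for all z ∈ [0,H]
  have hmax : ∀ z ∈ Set.Icc 0 H, f z ≤ f x := by
    intro z hz
    rcases le_total z x with h | h
    · exact hmonof ⟨hz.1, h⟩ ⟨hx0, le_rfl⟩ h
    · exact hantif ⟨le_rfl, hxH⟩ ⟨h, hz.2⟩ h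
  have hgreat : IsGreatest (f '' Set.Icc 0 H) (f x) := by
    constructor
    · exact ⟨x, ⟨hx0, hxH⟩, rfl⟩
    · rintro w ⟨z, hz, rfl⟩
      exact hmax z hz
  have := hgreat.csSup_eq
  simpa [dualU, IminU, hf, hT, hxdef] using this
end

section
/- The convex dual Ũ is a convex function on [0,∞), and it is differentiable at every y > 0 with derivative Ũ'(y) = −min(I(y), H). -/
open MeasureTheory Set Filter
open scoped ENNReal NNReal Topology

section aux

variable {H : ℝ} {U : ℝ → ℝ}

lemma Sne (y : ℝ) : ({z | z ∈ Set.Ioo 0 H ∧ deriv U z < y} ∪ {H}).Nonempty :=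
  ⟨H, Or.inr rfl⟩

lemma Sbdd (hH : 0 < H) (y : ℝ) :
    BddBelow ({z | z ∈ Set.Ioo 0 H ∧ deriv U z < y} ∪ {H}) := by
  refine ⟨0, ?_⟩
  rintro b (⟨⟨hb, _⟩, _⟩ | rfl)
  · exact hb.le
  · exact hH.le

lemma IminU_mem (hH : 0 < H) (y : ℝ) : IminU U H y ∈ Set.Icc 0 H := by
  constructor
  · exact le_csInf (Sne y) (by rintro b (⟨⟨hb, _⟩, _⟩ | rfl); exacts [hb.le, hH.le])
  · exact csInf_le (Sbdd hH y) (Or.inr rfl)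

lemma claimA (hH : 0 < H) {y z : ℝ} (hz0 : 0 < z) (hz : z < IminU U H y) :
    z ∈ Set.Ioo 0 H ∧ y ≤ deriv U z := by
  have hzH : z < H := lt_of_lt_of_le hz (IminU_mem hH y).2
  have hnot : z ∉ ({z | z ∈ Set.Ioo 0 H ∧ deriv U z < y} ∪ {H}) := by
    intro hmem
    exact absurd (csInf_le (Sbdd hH y) hmem) (not_le.2 hz)
  refine ⟨⟨hz0, hzH⟩, ?_⟩
  by_contra h
  exact hnot (Or.inl ⟨⟨hz0, hzH⟩, not_le.1 h⟩)

lemma claimB (hH : 0 < H)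
    (sAnti : StrictAntiOn (deriv U) (Set.Ioo 0 H))
    {y z : ℝ} (hz : IminU U H y < z) (hzH : z < H) :
    deriv U z < y := by
  obtain ⟨w, hw, hwz⟩ := exists_lt_of_csInf_lt (Sne (H := H) (U := U) y) hz
  rcases hw with hw | rfl
  · have hz0 : 0 < z := lt_trans hw.1.1 hwz
    exact lt_trans (sAnti hw.1 ⟨hz0, hzH⟩ hwz) hw.2
  · exact absurd hwz (not_lt.2 hzH.le)

/-- The sup defining `dualU` is attained at `IminU U H y`, for every real `y`. -/
lemma isMax (hH : 0 < H)
    (hcont : ContinuousOn U (Set.Ici 0))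
    (hdiff : ∀ z ∈ Set.Ioo 0 H, DifferentiableAt ℝ U z)
    (sAnti : StrictAntiOn (deriv U) (Set.Ioo 0 H))
    (y : ℝ) : ∀ z ∈ Set.Icc 0 H,
      U z - y * z ≤ U (IminU U H y) - y * (IminU U H y) := by
  set m := IminU U H y with hm
  have hm0 : 0 ≤ m := (IminU_mem hH y).1
  have hmH : m ≤ H := (IminU_mem hH y).2
  set g : ℝ → ℝ := fun z => U z - y * z with hg
  have hgd : ∀ z ∈ Set.Ioo 0 H, HasDerivAt g (deriv U z - y) z := by
    intro z hz
    exact ((hdiff z hz).hasDerivAt).sub (by simpa using (hasDerivAt_id z).const_mul y)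
  have hgc : ContinuousOn g (Set.Icc 0 H) := by
    apply ContinuousOn.sub
    · exact hcont.mono (fun x hx => hx.1)
    · exact (continuous_const.mul continuous_id).continuousOn
  have hmono : MonotoneOn g (Set.Icc 0 m) := by
    apply monotoneOn_of_deriv_nonneg (convex_Icc 0 m)
      (hgc.mono (Set.Icc_subset_Icc le_rfl hmH))
    · intro z hz
      rw [interior_Icc] at hz
      exact ((hgd z ⟨hz.1, lt_of_lt_of_le hz.2 hmH⟩).differentiableAt).differentiableWithinAt
    · intro z hz
      rw [interior_Icc] at hz
      have h := claimA (U := U) hH hz.1 hz.2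
      rw [(hgd z h.1).deriv]
      linarith [h.2]
  have hanti : AntitoneOn g (Set.Icc m H) := by
    apply antitoneOn_of_deriv_nonpos (convex_Icc m H)
      (hgc.mono (Set.Icc_subset_Icc hm0 le_rfl))
    · intro z hz
      rw [interior_Icc] at hz
      exact ((hgd z ⟨lt_of_le_of_lt hm0 hz.1, hz.2⟩).differentiableAt).differentiableWithinAt
    · intro z hz
      rw [interior_Icc] at hz
      have h := claimB (U := U) hH sAnti hz.1 hz.2
      rw [(hgd z ⟨lt_of_le_of_lt hm0 hz.1, hz.2⟩).deriv]
      linarith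
  intro z hz
  rcases le_total z m with h | h
  · exact hmono ⟨hz.1, h⟩ ⟨hm0, le_rfl⟩ h
  · exact hanti ⟨le_rfl, hmH⟩ ⟨h, hz.2⟩ h

lemma le_dualU (hH : 0 < H)
    (hcont : ContinuousOn U (Set.Ici 0))
    (hdiff : ∀ z ∈ Set.Ioo 0 H, DifferentiableAt ℝ U z)
    (sAnti : StrictAntiOn (deriv U) (Set.Ioo 0 H))
    (y : ℝ) {z : ℝ} (hz : z ∈ Set.Icc 0 H) :
    U z - y * z ≤ dualU U H y := by
  apply le_csSup
  · exact ⟨U (IminU U H y) - y * (IminU U H y), by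
      rintro _ ⟨w, hw, rfl⟩
      exact isMax hH hcont hdiff sAnti y w hw⟩
  · exact ⟨z, hz, rfl⟩

lemma dualU_eq (hH : 0 < H)
    (hcont : ContinuousOn U (Set.Ici 0))
    (hdiff : ∀ z ∈ Set.Ioo 0 H, DifferentiableAt ℝ U z)
    (sAnti : StrictAntiOn (deriv U) (Set.Ioo 0 H))
    (y : ℝ) : dualU U H y = U (IminU U H y) - y * (IminU U H y) := by
  apply le_antisymm
  · apply csSup_le
    · exact ⟨U 0 - y * 0, 0, ⟨le_rfl, hH.le⟩, rfl⟩
    · rintro _ ⟨z, hz, rfl⟩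
      exact isMax hH hcont hdiff sAnti y z hz
  · exact le_dualU hH hcont hdiff sAnti y (IminU_mem hH y)

lemma IminU_anti (hH : 0 < H) : Antitone (fun y => IminU U H y) := by
  intro y1 y2 h
  apply csInf_le_csInf (Sbdd hH y2) (Sne y1)
  rintro b (⟨hb1, hb2⟩ | rfl)
  · exact Or.inl ⟨hb1, lt_of_lt_of_le hb2 h⟩
  · exact Or.inr rfl

lemma IminU_cont (hH : 0 < H)
    (sAnti : StrictAntiOn (deriv U) (Set.Ioo 0 H))
    (y : ℝ) : ContinuousAt (fun y => IminU U H y) y := by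
  have claimL : ∀ a, IminU U H y < a → ∃ y1 < y, IminU U H y1 < a := by
    intro a ha
    rcases lt_or_ge (IminU U H y) H with hlt | hge
    · have hmin : IminU U H y < min a H := lt_min ha hlt
      obtain ⟨w, hw, hwa⟩ := exists_lt_of_csInf_lt (Sne (H := H) (U := U) y) hmin
      rcases hw with hw | hw
      · refine ⟨(deriv U w + y) / 2, by linarith [hw.2], ?_⟩
        calc IminU U H ((deriv U w + y) / 2)
            ≤ w := csInf_le (Sbdd hH _) (Or.inl ⟨hw.1, by linarith [hw.2]⟩)
          _ < a := lt_of_lt_of_le hwa (min_le_left a H)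
      · rw [Set.mem_singleton_iff] at hw
        exact absurd hwa (not_lt.2 (by rw [hw]; exact min_le_right a H))
    · refine ⟨y - 1, by linarith, ?_⟩
      calc IminU U H (y - 1) ≤ H := (IminU_mem hH _).2
        _ ≤ IminU U H y := hge
        _ < a := ha
  have claimR : ∀ a, a < IminU U H y → ∃ y2, y < y2 ∧ a < IminU U H y2 := by
    intro a ha
    by_contra hcon
    push_neg at hcon
    have ha' : ∀ y2, y < y2 → IminU U H y2 ≤ a := fun y2 h => hcon y2 h
    have ha0 : 0 ≤ a := le_trans (IminU_mem hH (y + 1)).1 (ha' (y + 1) (by linarith))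
    set c := IminU U H y with hc
    have key : ∀ z, a < z → z < c → deriv U z ≤ y := by
      intro z haz hzc
      have hzH : z < H := lt_of_lt_of_le hzc (IminU_mem hH y).2
      by_contra hgt
      push_neg at hgt
      have hy2y : y < (y + deriv U z) / 2 := by linarith
      have hlt : IminU U H ((y + deriv U z) / 2) < z :=
        lt_of_le_of_lt (ha' _ hy2y) haz
      have := claimB (U := U) hH sAnti hlt hzH
      linarith
    set z1 := a + (c - a) / 3 with hz1
    set z2 := a + 2 * ((c - a) / 3) with hz2
    have hz1c : z1 < c := by simp only [hz1]; linarith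
    have hz2c : z2 < c := by simp only [hz2]; linarith
    have hz10 : 0 < z1 := by simp only [hz1]; linarith
    have hz12 : z1 < z2 := by simp only [hz1, hz2]; linarith
    have h1 := claimA (U := U) hH hz10 hz1c
    have h2 := claimA (U := U) hH (lt_trans hz10 hz12) hz2c
    have k1 := key z1 (by simp only [hz1]; linarith) hz1c
    have k2 := key z2 (by simp only [hz2]; linarith) hz2c
    have := sAnti h1.1 h2.1 hz12
    linarith [h1.2, h2.2]
  rw [ContinuousAt, tendsto_order]
  constructor
  · intro a ha
    obtain ⟨y2, hy2, hay2⟩ := claimR a ha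
    filter_upwards [Iio_mem_nhds hy2] with y' hy'
    exact lt_of_lt_of_le hay2 (IminU_anti (U := U) hH hy'.le)
  · intro a ha
    obtain ⟨y1, hy1, hay1⟩ := claimL a ha
    filter_upwards [Ioi_mem_nhds hy1] with y' hy'
    exact lt_of_le_of_lt (IminU_anti (U := U) hH hy'.le) hay1

end aux

/-- The convex dual `Ũ` is convex on `[0,∞)` and differentiable at every
`y > 0` with derivative `Ũ'(y) = −min(I(y), H)`. -/
theorem stmt1 (H : ℝ) (hH : 0 < H) (U : ℝ → ℝ)
    (hU0 : ∀ z, 0 ≤ z → 0 ≤ U z)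
    (hmono : MonotoneOn U (Set.Ici 0))
    (hcont : ContinuousOn U (Set.Ici 0))
    (hconc : StrictConcaveOn ℝ (Set.Ioo 0 H) U)
    (hdiff : ∀ z ∈ Set.Ioo 0 H, DifferentiableAt ℝ U z)
    (hcap : ∀ w, 0 ≤ w → U w = U (min w H)) :
    ConvexOn ℝ (Set.Ici 0) (dualU U H) ∧
      ∀ y, 0 < y → HasDerivAt (dualU U H) (-(IminU U H y)) y := by
  have sAnti : StrictAntiOn (deriv U) (Set.Ioo 0 H) :=
    hconc.strictAntiOn_deriv hdiff
  have hle : ∀ (y : ℝ) {z : ℝ}, z ∈ Set.Icc 0 H → U z - y * z ≤ dualU U H y :=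
    fun y _ hz => le_dualU hH hcont hdiff sAnti y hz
  have heq : ∀ y : ℝ, dualU U H y = U (IminU U H y) - y * (IminU U H y) :=
    dualU_eq hH hcont hdiff sAnti
  constructor
  · refine ⟨convex_Ici 0, ?_⟩
    intro y1 _ y2 _ a b ha hb hab
    simp only [smul_eq_mul]
    refine csSup_le ⟨U 0 - (a * y1 + b * y2) * 0, ⟨0, ⟨le_rfl, hH.le⟩, rfl⟩⟩ ?_
    rintro _ ⟨z, hz, rfl⟩
    have h1 : U z - y1 * z ≤ dualU U H y1 := hle y1 hz
    have h2 : U z - y2 * z ≤ dualU U H y2 := hle y2 hz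
    have h1' := mul_le_mul_of_nonneg_left h1 ha
    have h2' := mul_le_mul_of_nonneg_left h2 hb
    have hUz : a * U z + b * U z = U z := by rw [← add_mul, hab, one_mul]
    simp only []
    nlinarith [h1', h2', hUz]
  · intro y _
    rw [hasDerivAt_iff_tendsto_slope, ← tendsto_sub_nhds_zero_iff]
    apply squeeze_zero_norm' (a := fun y' => |IminU U H y' - IminU U H y|)
    · filter_upwards [eventually_mem_nhdsWithin] with y' hy'
      have hy'ne : y' ≠ y := hy'
      have hne : y' - y ≠ 0 := sub_ne_zero.2 hy'ne
      set c := IminU U H y with hc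
      set c' := IminU U H y' with hc'
      set D := dualU U H y' - dualU U H y with hDdef
      have e1 : dualU U H y = U c - y * c := heq y
      have e2 : dualU U H y' = U c' - y' * c' := heq y'
      have i1 : U c - y' * c ≤ dualU U H y' := hle y' (IminU_mem (U := U) hH y)
      have i2 : U c' - y * c' ≤ dualU U H y := hle y (IminU_mem (U := U) hH y')
      have hlow : y * c - y' * c ≤ D := by
        rw [hDdef, e1]; linarith
      have hhigh : D ≤ y * c' - y' * c' := by
        rw [hDdef, e2]; linarith
      have habs1 : c - c' ≤ |c' - c| := by rw [abs_sub_comm]; exact le_abs_self _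
      have habs2 : c' - c ≤ |c' - c| := le_abs_self _
      have habs0 : (0:ℝ) ≤ |c' - c| := abs_nonneg _
      rw [Real.norm_eq_abs, slope_def_field, abs_le]
      have hsl : (dualU U H y' - dualU U H y) / (y' - y) = D / (y' - y) := rfl
      rcases lt_or_gt_of_ne hne with ht | ht
      · have hA : D / (y' - y) ≤ -c := by
          rw [div_le_iff_of_neg ht]; nlinarith
        have hB : -c' ≤ D / (y' - y) := by
          rw [le_div_iff_of_neg ht]; nlinarith
        constructor <;> · simp only [sub_neg_eq_add]; linarith
      · have hA : -c ≤ D / (y' - y) := by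
          rw [le_div_iff₀ ht]; nlinarith
        have hB : D / (y' - y) ≤ -c' := by
          rw [div_le_iff₀ ht]; nlinarith
        constructor <;> · simp only [sub_neg_eq_add]; linarith
    · have hc : Filter.Tendsto (fun y' => IminU U H y') (𝓝[≠] y) (𝓝 (IminU U H y)) :=
        ((IminU_cont (U := U) hH sAnti y).tendsto).mono_left nhdsWithin_le_nhds
      have := (hc.sub_const (IminU U H y)).abs
      simpa using this
end

section
/- The right derivative of the convex dual at 0 equals −H; that is, lim_{y↓0} (U(H) − Ũ(y))/y = H. -/
open MeasureTheory Set Filter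
open scoped ENNReal NNReal Topology

/-- The right derivative of the convex dual at `0` equals `−H`:
`lim_{y↓0} (U(H) − Ũ(y))/y = H`. -/
theorem stmt3 (H : ℝ) (hH : 0 < H) (U : ℝ → ℝ)
    (hU0 : ∀ z, 0 ≤ z → 0 ≤ U z)
    (hmono : MonotoneOn U (Set.Ici 0))
    (hcont : ContinuousOn U (Set.Ici 0))
    (hconc : StrictConcaveOn ℝ (Set.Ioo 0 H) U)
    (hdiff : ∀ z ∈ Set.Ioo 0 H, DifferentiableAt ℝ U z)
    (hcap : ∀ w, 0 ≤ w → U w = U (min w H)) :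
    Tendsto (fun y => (U H - dualU U H y) / y)
      (nhdsWithin 0 (Set.Ioi 0)) (nhds H) := by
  rw [Metric.tendsto_nhdsWithin_nhds]
  intro ε hε
  set ε' := min ε H / 2 with hε'def
  have hε'pos : 0 < ε' := by
    have := lt_min hε hH
    positivity
  have hε'ltH : ε' < H := by
    have h1 : min ε H ≤ H := min_le_right _ _
    have : ε' ≤ H / 2 := by rw [hε'def]; linarith
    linarith
  have hε'ltε : ε' < ε := by
    have h1 : min ε H ≤ ε := min_le_left _ _
    have : ε' ≤ ε / 2 := by rw [hε'def]; linarith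
    linarith
  -- strict increase: U (H - ε') < U H
  have hUlt : U (H - ε') < U H := by
    set a := H - ε' with ha
    set m := H - ε' / 2 with hm
    have haI : a ∈ Set.Ioo 0 H := ⟨by simp [ha]; linarith, by simp [ha]; linarith⟩
    have hmI : m ∈ Set.Ioo 0 H := ⟨by simp [hm]; linarith, by simp [hm]; linarith⟩
    have ham : a < m := by simp [ha, hm]; linarith
    have hUam : U a < U m := by
      rcases lt_or_ge (U a) (U m) with h | h
      · exact h
      exfalso
      have heq : U m = U a :=
        le_antisymm h (hmono (le_of_lt haI.1) (le_of_lt hmI.1) ham.le)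
      have hp := hconc.2 haI hmI (ne_of_lt ham)
        (by norm_num : (0:ℝ) < 1/2) (by norm_num : (0:ℝ) < 1/2) (by norm_num)
      simp only [smul_eq_mul] at hp
      have hpmem : (0:ℝ) ≤ 1/2 * a + 1/2 * m := by nlinarith [haI.1, hmI.1]
      have hple : (1/2) * a + (1/2) * m ≤ m := by linarith
      have := hmono hpmem (le_of_lt hmI.1) hple
      linarith
    have := hmono (le_of_lt hmI.1) hH.le (by simp [hm]; linarith : m ≤ H)
    linarith
  set c := U H - U (H - ε') with hc
  have hc0 : 0 < c := by rw [hc]; linarith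
  -- bounds on dualU
  have hbdd : ∀ y : ℝ, 0 ≤ y → BddAbove ((fun z => U z - y * z) '' Set.Icc 0 H) := by
    intro y hy
    refine ⟨U H, ?_⟩
    rintro w ⟨z, ⟨hz0, hzH⟩, rfl⟩
    dsimp only
    have h1 : U z ≤ U H := hmono hz0 hH.le hzH
    nlinarith [mul_nonneg hy hz0]
  have hge : ∀ y : ℝ, 0 ≤ y → U H - y * H ≤ dualU U H y := by
    intro y hy
    exact le_csSup (hbdd y hy) ⟨H, ⟨hH.le, le_refl H⟩, rfl⟩
  have hle : ∀ y : ℝ, 0 ≤ y → y * H ≤ c → dualU U H y ≤ U H - y * (H - ε') := by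
    intro y hy hyc
    apply csSup_le ((Set.nonempty_Icc.mpr hH.le).image _)
    rintro w ⟨z, ⟨hz0, hzH⟩, rfl⟩
    dsimp only
    rcases le_or_gt z (H - ε') with h | h
    · have h1 : U z ≤ U (H - ε') := hmono hz0 (by simp only [Set.mem_Ici]; linarith) h
      have h2 : U (H - ε') = U H - c := by rw [hc]; ring
      nlinarith [mul_nonneg hy hz0, mul_nonneg hy hε'pos.le]
    · have h1 : U z ≤ U H := hmono hz0 hH.le hzH
      nlinarith [mul_nonneg hy (sub_nonneg.mpr h.le)]
  refine ⟨c / H, div_pos hc0 hH, ?_⟩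
  intro y hy hyd
  have hy0 : 0 < y := hy
  have hyH : y * H ≤ c := by
    rw [Real.dist_eq, sub_zero] at hyd
    have hylt : y < c / H := (abs_lt.mp hyd).2
    exact ((lt_div_iff₀ hH).mp hylt).le
  have h1 := hge y hy0.le
  have h2 := hle y hy0.le hyH
  rw [Real.dist_eq, abs_lt]
  constructor
  · have hlow : H - ε' ≤ (U H - dualU U H y) / y := by
      rw [le_div_iff₀ hy0, mul_comm]
      linarith
    linarith
  · have hupp : (U H - dualU U H y) / y ≤ H := by
      rw [div_le_iff₀ hy0, mul_comm]
      linarith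
    linarith
end

section
/- The random field (y, ω) ↦ min(I(y, ω), H(ω)) is measurable with respect to the product σ-algebra B((0,∞)) ⊗ F. -/
open MeasureTheory Set Filter
open scoped ENNReal NNReal Topology

/-- Auxiliary: truncated difference-quotient limit, measurable in `ω`, which
agrees with `deriv (U ω) q` when `q ∈ Ioo 0 (H ω)`. -/
noncomputable def derivAux {Ω : Type*} (U : Ω → ℝ → ℝ) (H : Ω → ℝ) (q : ℝ) (ω : Ω) : ℝ :=
  if q < H ω then deriv (U ω) q else 0

lemma derivAux_measurable {Ω : Type*} [MeasurableSpace Ω]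
    (U : Ω → ℝ → ℝ) (H : Ω → ℝ) (hHmeas : Measurable H)
    (hUdiff : ∀ ω, ∀ z ∈ Set.Ioo 0 (H ω), DifferentiableAt ℝ (U ω) z)
    (hUmeas : ∀ z, Measurable fun ω => U ω z) (q : ℝ) (hq : 0 < q) :
    Measurable (derivAux U H q) := by
  have hfn : ∀ n : ℕ, Measurable fun ω =>
      if q < H ω then (U ω (q + 1 / (n + 1)) - U ω q) * (n + 1) else (0 : ℝ) := by
    intro n
    apply Measurable.ite (measurableSet_lt measurable_const hHmeas)
    · exact ((hUmeas _).sub (hUmeas q)).mul measurable_const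
    · exact measurable_const
  apply measurable_of_tendsto_metrizable hfn
  rw [tendsto_pi_nhds]
  intro ω
  by_cases h : q < H ω
  · simp only [derivAux, if_pos h]
    have hd : HasDerivAt (U ω) (deriv (U ω) q) q :=
      (hUdiff ω q ⟨hq, h⟩).hasDerivAt
    have hslope := hd.tendsto_slope_zero_right
    have hpos : ∀ n : ℕ, (0 : ℝ) < 1 / (n + 1) := by
      intro n; positivity
    have hseq : Tendsto (fun n : ℕ => (1 : ℝ) / (n + 1)) atTop (𝓝[>] 0) := by
      apply tendsto_nhdsWithin_of_tendsto_nhds_of_eventually_within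
      · exact tendsto_one_div_add_atTop_nhds_zero_nat
      · exact Eventually.of_forall fun n => hpos n
    have := hslope.comp hseq
    convert this using 2 with n
    simp only [Function.comp_apply, if_pos h]
    field_simp
    ring
  · simp only [derivAux, if_neg h]
    exact tendsto_const_nhds

/-- The random field `(y, ω) ↦ min(I(y, ω), H(ω))` is measurable with respect
to the product σ-algebra `B((0,∞)) ⊗ F`. -/
theorem stmt5 {Ω : Type*} [MeasurableSpace Ω] (μ : Measure Ω) [IsProbabilityMeasure μ]
    (H : Ω → ℝ) (hHmeas : Measurable H) (hHpos : ∀ ω, 0 < H ω)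
    (U : Ω → ℝ → ℝ)
    (hU0 : ∀ ω, ∀ z, 0 ≤ z → 0 ≤ U ω z)
    (hUmono : ∀ ω, MonotoneOn (U ω) (Set.Ici 0))
    (hUcont : ∀ ω, ContinuousOn (U ω) (Set.Ici 0))
    (hUconc : ∀ ω, StrictConcaveOn ℝ (Set.Ioo 0 (H ω)) (U ω))
    (hUdiff : ∀ ω, ∀ z ∈ Set.Ioo 0 (H ω), DifferentiableAt ℝ (U ω) z)
    (hUcap : ∀ ω, ∀ w, 0 ≤ w → U ω w = U ω (min w (H ω)))
    (hUmeas : ∀ z, Measurable fun ω => U ω z)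
    (hUint : Integrable (fun ω => U ω (H ω)) μ) :
    Measurable fun p : (Set.Ioi (0 : ℝ)) × Ω =>
      IminU (U p.2) (H p.2) (p.1 : ℝ) := by
  -- antitone derivative
  have hanti : ∀ ω, AntitoneOn (deriv (U ω)) (Set.Ioo 0 (H ω)) := fun ω =>
    (hUconc ω).concaveOn.antitoneOn_deriv (hUdiff ω)
  apply measurable_of_Iio
  intro t
  -- describe the sublevel set
  have hset : (fun p : (Set.Ioi (0 : ℝ)) × Ω => IminU (U p.2) (H p.2) (p.1 : ℝ)) ⁻¹' Set.Iio t
      = {p : (Set.Ioi (0 : ℝ)) × Ω | H p.2 < t} ∪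
        ⋃ q : ℚ, {p : (Set.Ioi (0 : ℝ)) × Ω |
          0 < (q : ℝ) ∧ (q : ℝ) < H p.2 ∧ (q : ℝ) < t ∧ derivAux U H q p.2 < (p.1 : ℝ)} := by
    ext ⟨y, ω⟩
    simp only [Set.mem_preimage, Set.mem_Iio, Set.mem_union, Set.mem_iUnion, Set.mem_setOf_eq]
    set A : Set ℝ := {z | z ∈ Set.Ioo 0 (H ω) ∧ deriv (U ω) z < (y : ℝ)} ∪ {H ω} with hA
    have hAne : A.Nonempty := ⟨H ω, Or.inr rfl⟩
    have hAbdd : BddBelow A := by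
      refine ⟨0, fun z hz => ?_⟩
      rcases hz with ⟨⟨h1, _⟩, _⟩ | h
      · exact le_of_lt h1
      · simp only [Set.mem_singleton_iff] at h; exact h ▸ (hHpos ω).le
    constructor
    · intro hlt
      rw [IminU] at hlt
      obtain ⟨z, hzA, hzt⟩ := exists_lt_of_csInf_lt hAne hlt
      rcases hzA with ⟨hz1, hz2⟩ | hz
      · -- z ∈ Ioo 0 H, deriv < y, z < t; choose rational q ∈ (z, min t (H ω))
        right
        obtain ⟨q, hq1, hq2⟩ := exists_rat_btwn (lt_min hzt hz1.2)
        have hq0 : (0 : ℝ) < q := lt_trans hz1.1 hq1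
        have hqH : (q : ℝ) < H ω := lt_of_lt_of_le hq2 (min_le_right _ _)
        refine ⟨q, hq0, hqH, lt_of_lt_of_le hq2 (min_le_left _ _), ?_⟩
        have hd : deriv (U ω) q ≤ deriv (U ω) z :=
          hanti ω hz1 ⟨hq0, hqH⟩ hq1.le
        have : derivAux U H q ω = deriv (U ω) q := if_pos hqH
        rw [this]
        exact lt_of_le_of_lt hd hz2
      · left
        simp only [Set.mem_singleton_iff] at hz
        exact hz ▸ hzt
    · intro h
      rw [IminU]
      rcases h with h | ⟨q, hq0, hqH, hqt, hqd⟩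
      · exact lt_of_le_of_lt (csInf_le hAbdd (Or.inr rfl)) h
      · have : derivAux U H q ω = deriv (U ω) q := if_pos hqH
        rw [this] at hqd
        exact lt_of_le_of_lt (csInf_le hAbdd (Or.inl ⟨⟨hq0, hqH⟩, hqd⟩)) hqt
  rw [hset]
  have hHm : Measurable fun p : (Set.Ioi (0 : ℝ)) × Ω => H p.2 := hHmeas.comp measurable_snd
  have hym : Measurable fun p : (Set.Ioi (0 : ℝ)) × Ω => (p.1 : ℝ) :=
    measurable_subtype_coe.comp measurable_fst
  apply MeasurableSet.union
  · exact measurableSet_lt hHm measurable_const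
  · apply MeasurableSet.iUnion
    intro q
    by_cases hq0 : (0 : ℝ) < q
    · have hDm : Measurable fun p : (Set.Ioi (0 : ℝ)) × Ω => derivAux U H q p.2 :=
        (derivAux_measurable U H hHmeas hUdiff hUmeas q hq0).comp measurable_snd
      have h1 : MeasurableSet {p : (Set.Ioi (0 : ℝ)) × Ω | (q : ℝ) < H p.2} :=
        measurableSet_lt measurable_const hHm
      have h2 : MeasurableSet {p : (Set.Ioi (0 : ℝ)) × Ω | derivAux U H q p.2 < (p.1 : ℝ)} :=
        measurableSet_lt hDm hym
      have : {p : (Set.Ioi (0 : ℝ)) × Ω |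
          0 < (q : ℝ) ∧ (q : ℝ) < H p.2 ∧ (q : ℝ) < t ∧ derivAux U H q p.2 < (p.1 : ℝ)} =
          ({p : (Set.Ioi (0 : ℝ)) × Ω | (q : ℝ) < H p.2} ∩
            {p : (Set.Ioi (0 : ℝ)) × Ω | derivAux U H q p.2 < (p.1 : ℝ)}) ∩
          {p : (Set.Ioi (0 : ℝ)) × Ω | 0 < (q : ℝ) ∧ (q : ℝ) < t} := by
        ext p; simp only [Set.mem_setOf_eq, Set.mem_inter_iff]; tauto
      rw [this]
      apply MeasurableSet.inter (h1.inter h2)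
      by_cases hqt : (q : ℝ) < t
      · simp only [hq0, hqt, and_self, Set.setOf_true]; exact MeasurableSet.univ
      · simp only [hqt, and_false, Set.setOf_false]; exact MeasurableSet.empty
    · have : {p : (Set.Ioi (0 : ℝ)) × Ω |
          0 < (q : ℝ) ∧ (q : ℝ) < H p.2 ∧ (q : ℝ) < t ∧ derivAux U H q p.2 < (p.1 : ℝ)} = ∅ := by
        ext p; simp only [Set.mem_setOf_eq, Set.mem_empty_iff_false, iff_false]
        exact fun h => hq0 h.1
      rw [this]; exact MeasurableSet.empty
end

section
/- If 0 < w_D < ∞, then the dual value function v is w_D-Lipschitz on (0,∞): |v(y₁) − v(y₂)| ≤ w_D·|y₁ − y₂| for all y₁, y₂ > 0; in particular, v is uniformly continuous on (0,∞). -/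
/-!
Each `Ũ(·, ω)` is a supremum of affine functions `y ↦ U(z, ω) − y z` with slopes `−z ∈ [−H(ω), 0]`,
hence `H(ω)`-Lipschitz. Integrating against `ξ ∈ D` makes `y ↦ E[Ũ(y ξ)]` Lipschitz with
constant `E[ξ H] ≤ w_D`, and an infimum of `w_D`-Lipschitz functions is `w_D`-Lipschitz.
Measurability of `ω ↦ Ũ(y ξ(ω), ω)` comes from continuity of `U(·, ω)`, which lets the
supremum run over rational `z` only.
-/

open MeasureTheory Set Filter
open scoped ENNReal NNReal Topology

/-- The dual value function `v(y) := inf_{ξ ∈ D} E[Ũ(y·ξ(·), ·)]`. -/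
noncomputable def dualValue {Ω : Type*} [MeasurableSpace Ω] (μ : Measure Ω)
    (U : Ω → ℝ → ℝ) (H : Ω → ℝ) (D : Set (Ω → ℝ)) (y : ℝ) : ℝ :=
  sInf ((fun ξ => ∫ ω, dualU (U ω) (H ω) (y * ξ ω) ∂μ) '' D)

/-- `w_D := sup_{ξ ∈ D} E[ξ·H]` (as an extended nonnegative real). -/
noncomputable def wDual {Ω : Type*} [MeasurableSpace Ω] (μ : Measure Ω)
    (H : Ω → ℝ) (D : Set (Ω → ℝ)) : ℝ≥0∞ :=
  ⨆ ξ ∈ D, ∫⁻ ω, ENNReal.ofReal (ξ ω * H ω) ∂μ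

lemma csInf_image_le_csInf_image_add {α : Type*} {D : Set α} {F G : α → ℝ} {c : ℝ}
    (hD : D.Nonempty) (hF : BddBelow (F '' D)) (h : ∀ x ∈ D, F x ≤ G x + c) :
    sInf (F '' D) ≤ sInf (G '' D) + c := by
  have : sInf (F '' D) - c ≤ sInf (G '' D) := le_csInf (hD.image G) <| by
    rintro _ ⟨x, hx, rfl⟩
    linarith [csInf_le hF ⟨x, hx, rfl⟩, h x hx]
  linarith

section DualU

variable {f : ℝ → ℝ} {H t t₁ t₂ z : ℝ}

lemma sub_mul_le_apply_of_monotoneOn (hf : MonotoneOn f (Ici 0)) (ht : 0 ≤ t)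
    (hz : z ∈ Icc 0 H) : f z - t * z ≤ f H := by
  linarith [hf hz.1 (hz.1.trans hz.2) hz.2, mul_nonneg ht hz.1]

lemma bddAbove_dualU_image (hf : MonotoneOn f (Ici 0)) (ht : 0 ≤ t) :
    BddAbove ((fun z => f z - t * z) '' Icc 0 H) :=
  ⟨f H, by rintro _ ⟨z, hz, rfl⟩; exact sub_mul_le_apply_of_monotoneOn hf ht hz⟩

lemma sub_mul_le_dualU (hf : MonotoneOn f (Ici 0)) (ht : 0 ≤ t) (hz : z ∈ Icc 0 H) :
    f z - t * z ≤ dualU f H t :=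
  le_csSup (bddAbove_dualU_image hf ht) ⟨z, hz, rfl⟩

lemma apply_zero_le_dualU (hf : MonotoneOn f (Ici 0)) (hH : 0 ≤ H) (ht : 0 ≤ t) :
    f 0 ≤ dualU f H t := by
  simpa using sub_mul_le_dualU hf ht ⟨le_rfl, hH⟩

lemma dualU_le_apply (hf : MonotoneOn f (Ici 0)) (hH : 0 ≤ H) (ht : 0 ≤ t) :
    dualU f H t ≤ f H :=
  csSup_le ((nonempty_Icc.2 hH).image _) <| by
    rintro _ ⟨z, hz, rfl⟩; exact sub_mul_le_apply_of_monotoneOn hf ht hz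

lemma dualU_le_dualU_add (hf : MonotoneOn f (Ici 0)) (hH : 0 ≤ H) (ht₂ : 0 ≤ t₂) :
    dualU f H t₁ ≤ dualU f H t₂ + H * |t₁ - t₂| :=
  csSup_le ((nonempty_Icc.2 hH).image _) <| by
    rintro _ ⟨z, hz, rfl⟩
    have hslope : (t₂ - t₁) * z ≤ H * |t₁ - t₂| := by
      rw [abs_sub_comm, mul_comm H]
      exact mul_le_mul (le_abs_self _) hz.2 hz.1 (abs_nonneg _)
    linarith [sub_mul_le_dualU hf ht₂ hz]

lemma Icc_subset_closure_Icc_inter_range_ratCast (hH : 0 < H) :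
    Icc 0 H ⊆ closure (Icc 0 H ∩ range ((↑) : ℚ → ℝ)) :=
  calc Icc 0 H = closure (Ioo 0 H) := (closure_Ioo hH.ne).symm
    _ ⊆ closure (Ioo 0 H ∩ range ((↑) : ℚ → ℝ)) :=
      closure_minimal (Rat.denseRange_cast.open_subset_closure_inter isOpen_Ioo) isClosed_closure
    _ ⊆ closure (Icc 0 H ∩ range ((↑) : ℚ → ℝ)) :=
      closure_mono (inter_subset_inter_left _ Ioo_subset_Icc_self)

lemma dualU_eq_iSup_rat (hf : MonotoneOn f (Ici 0)) (hcont : ContinuousOn f (Ici 0))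
    (hH : 0 < H) (ht : 0 ≤ t) :
    dualU f H t = ⨆ q : ℚ, if (q : ℝ) ∈ Icc 0 H then f q - t * q else f 0 := by
  set g : ℚ → ℝ := fun q => if (q : ℝ) ∈ Icc 0 H then f q - t * q else f 0
  have hg : BddAbove (range g) := ⟨f H, by
    rintro _ ⟨q, rfl⟩
    by_cases hq : (q : ℝ) ∈ Icc 0 H
    · simpa only [g, if_pos hq] using sub_mul_le_apply_of_monotoneOn hf ht hq
    · simpa only [g, if_neg hq] using hf self_mem_Ici hH.le hH.le⟩
  refine le_antisymm (csSup_le ((nonempty_Icc.2 hH.le).image _) ?_) (ciSup_le fun q => ?_)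
  · rintro _ ⟨z, hz, rfl⟩
    have hgz : ContinuousWithinAt (fun z => f z - t * z) (Icc 0 H) z :=
      ((hcont.mono Icc_subset_Ici_self).sub (continuousOn_const.mul continuousOn_id)) z hz
    refine (isClosed_Iic.closure_subset_iff.2 ?_)
      ((hgz.mono inter_subset_left).mem_closure_image
        (Icc_subset_closure_Icc_inter_range_ratCast hH hz))
    rintro _ ⟨_, ⟨hq, q, rfl⟩, rfl⟩
    simpa only [g, if_pos hq, mem_Iic] using le_ciSup hg q
  · by_cases hq : (q : ℝ) ∈ Icc 0 H
    · simpa only [g, if_pos hq] using sub_mul_le_dualU hf ht hq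
    · simpa only [g, if_neg hq] using apply_zero_le_dualU hf hH.le ht

end DualU

section Expectations

variable {Ω : Type*} [MeasurableSpace Ω] {μ : Measure Ω} {H : Ω → ℝ} {U : Ω → ℝ → ℝ}
  {D : Set (Ω → ℝ)} {ξ : Ω → ℝ} {a b : ℝ}

lemma measurable_dualU (hH : Measurable H) (hHpos : ∀ ω, 0 < H ω)
    (hUmono : ∀ ω, MonotoneOn (U ω) (Ici 0)) (hUcont : ∀ ω, ContinuousOn (U ω) (Ici 0))
    (hUmeas : ∀ z, Measurable fun ω => U ω z) {t : Ω → ℝ} (ht : Measurable t)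
    (ht0 : ∀ ω, 0 ≤ t ω) :
    Measurable fun ω => dualU (U ω) (H ω) (t ω) := by
  simp_rw [dualU_eq_iSup_rat (hUmono _) (hUcont _) (hHpos _) (ht0 _)]
  refine Measurable.iSup fun q => ?_
  refine Measurable.ite ?_ ((hUmeas q).sub (ht.mul_const _)) (hUmeas 0)
  exact (MeasurableSet.const _).inter (measurableSet_le measurable_const hH)

lemma integrable_dualU (hH : Measurable H) (hHpos : ∀ ω, 0 < H ω)
    (hU0 : ∀ ω, 0 ≤ U ω 0) (hUmono : ∀ ω, MonotoneOn (U ω) (Ici 0))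
    (hUcont : ∀ ω, ContinuousOn (U ω) (Ici 0)) (hUmeas : ∀ z, Measurable fun ω => U ω z)
    (hUint : Integrable (fun ω => U ω (H ω)) μ) {t : Ω → ℝ} (ht : Measurable t)
    (ht0 : ∀ ω, 0 ≤ t ω) :
    Integrable (fun ω => dualU (U ω) (H ω) (t ω)) μ := by
  refine hUint.mono' (measurable_dualU hH hHpos hUmono hUcont hUmeas ht ht0).aestronglyMeasurable
    (Eventually.of_forall fun ω => ?_)
  have hlow := apply_zero_le_dualU (hUmono ω) (hHpos ω).le (ht0 ω)
  rw [Real.norm_of_nonneg ((hU0 ω).trans hlow)]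
  exact dualU_le_apply (hUmono ω) (hHpos ω).le (ht0 ω)

lemma lintegral_le_wDual (hξ : ξ ∈ D) :
    ∫⁻ ω, ENNReal.ofReal (ξ ω * H ω) ∂μ ≤ wDual μ H D :=
  le_iSup₂ (f := fun ξ _ => ∫⁻ ω, ENNReal.ofReal (ξ ω * H ω) ∂μ) ξ hξ

lemma integrable_mul_of_mem (hw : wDual μ H D ≠ ⊤) (hξ : ξ ∈ D)
    (hm : AEStronglyMeasurable (fun ω => ξ ω * H ω) μ) (hpos : ∀ ω, 0 ≤ ξ ω * H ω) :
    Integrable (fun ω => ξ ω * H ω) μ :=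
  (lintegral_ofReal_ne_top_iff_integrable hm (Eventually.of_forall hpos)).1 <|
    ne_top_of_le_ne_top hw (lintegral_le_wDual hξ)

lemma integral_mul_le_wDual (hw : wDual μ H D ≠ ⊤) (hξ : ξ ∈ D)
    (hm : AEStronglyMeasurable (fun ω => ξ ω * H ω) μ) (hpos : ∀ ω, 0 ≤ ξ ω * H ω) :
    ∫ ω, ξ ω * H ω ∂μ ≤ (wDual μ H D).toReal := by
  rw [integral_eq_lintegral_of_nonneg_ae (Eventually.of_forall hpos) hm]
  exact ENNReal.toReal_mono hw (lintegral_le_wDual hξ)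

lemma integral_dualU_le_add (hH : Measurable H) (hHpos : ∀ ω, 0 < H ω)
    (hU0 : ∀ ω, 0 ≤ U ω 0) (hUmono : ∀ ω, MonotoneOn (U ω) (Ici 0))
    (hUcont : ∀ ω, ContinuousOn (U ω) (Ici 0)) (hUmeas : ∀ z, Measurable fun ω => U ω z)
    (hUint : Integrable (fun ω => U ω (H ω)) μ) (hw : wDual μ H D ≠ ⊤) (hξD : ξ ∈ D)
    (hξ : Measurable ξ) (hξ0 : ∀ ω, 0 ≤ ξ ω) (ha : 0 ≤ a) (hb : 0 ≤ b) :
    ∫ ω, dualU (U ω) (H ω) (a * ξ ω) ∂μ ≤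
      ∫ ω, dualU (U ω) (H ω) (b * ξ ω) ∂μ + (wDual μ H D).toReal * |a - b| := by
  have hξH_meas := (hξ.mul hH).aestronglyMeasurable (μ := μ)
  have hξH_pos : ∀ ω, 0 ≤ ξ ω * H ω := fun ω => mul_nonneg (hξ0 ω) (hHpos ω).le
  have hξH_int := integrable_mul_of_mem hw hξD hξH_meas hξH_pos
  have hint : ∀ c, 0 ≤ c → Integrable (fun ω => dualU (U ω) (H ω) (c * ξ ω)) μ := fun c hc =>
    integrable_dualU hH hHpos hU0 hUmono hUcont hUmeas hUint (hξ.const_mul c)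
      fun ω => mul_nonneg hc (hξ0 ω)
  have hpointwise : ∀ ω, dualU (U ω) (H ω) (a * ξ ω) ≤
      dualU (U ω) (H ω) (b * ξ ω) + |a - b| * (ξ ω * H ω) := fun ω =>
    calc _ ≤ _ := dualU_le_dualU_add (hUmono ω) (hHpos ω).le (mul_nonneg hb (hξ0 ω))
      _ = _ := by rw [← sub_mul, abs_mul, abs_of_nonneg (hξ0 ω)]; ring
  calc ∫ ω, dualU (U ω) (H ω) (a * ξ ω) ∂μ
      ≤ ∫ ω, dualU (U ω) (H ω) (b * ξ ω) + |a - b| * (ξ ω * H ω) ∂μ :=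
        integral_mono (hint a ha) ((hint b hb).add (hξH_int.const_mul _)) hpointwise
    _ = ∫ ω, dualU (U ω) (H ω) (b * ξ ω) ∂μ + |a - b| * ∫ ω, ξ ω * H ω ∂μ := by
        rw [integral_add (hint b hb) (hξH_int.const_mul _), integral_const_mul]
    _ ≤ ∫ ω, dualU (U ω) (H ω) (b * ξ ω) ∂μ + (wDual μ H D).toReal * |a - b| := by
        rw [mul_comm (wDual μ H D).toReal]
        gcongr
        exact integral_mul_le_wDual hw hξD hξH_meas hξH_pos

lemma dualValue_le_add (hH : Measurable H) (hHpos : ∀ ω, 0 < H ω)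
    (hU0 : ∀ ω, 0 ≤ U ω 0) (hUmono : ∀ ω, MonotoneOn (U ω) (Ici 0))
    (hUcont : ∀ ω, ContinuousOn (U ω) (Ici 0)) (hUmeas : ∀ z, Measurable fun ω => U ω z)
    (hUint : Integrable (fun ω => U ω (H ω)) μ) (hw : wDual μ H D ≠ ⊤) (hD : D.Nonempty)
    (hDmeas : ∀ ξ ∈ D, Measurable ξ) (hDpos : ∀ ξ ∈ D, ∀ ω, 0 ≤ ξ ω) (ha : 0 ≤ a) (hb : 0 ≤ b) :
    dualValue μ U H D a ≤ dualValue μ U H D b + (wDual μ H D).toReal * |a - b| := by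
  refine csInf_image_le_csInf_image_add hD ⟨0, ?_⟩ fun ξ hξ => integral_dualU_le_add hH hHpos
    hU0 hUmono hUcont hUmeas hUint hw hξ (hDmeas ξ hξ) (hDpos ξ hξ) ha hb
  rintro _ ⟨ξ, hξ, rfl⟩
  exact integral_nonneg fun ω =>
    (hU0 ω).trans (apply_zero_le_dualU (hUmono ω) (hHpos ω).le (mul_nonneg ha (hDpos ξ hξ ω)))

end Expectations

theorem stmt7_general {Ω : Type*} [MeasurableSpace Ω] (μ : Measure Ω)
    (H : Ω → ℝ) (hHmeas : Measurable H) (hHpos : ∀ ω, 0 < H ω)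
    (U : Ω → ℝ → ℝ)
    (hU0 : ∀ ω, ∀ z, 0 ≤ z → 0 ≤ U ω z)
    (hUmono : ∀ ω, MonotoneOn (U ω) (Set.Ici 0))
    (hUcont : ∀ ω, ContinuousOn (U ω) (Set.Ici 0))
    (hUmeas : ∀ z, Measurable fun ω => U ω z)
    (hUint : Integrable (fun ω => U ω (H ω)) μ)
    (D : Set (Ω → ℝ)) (hDne : D.Nonempty)
    (hDmeas : ∀ ξ ∈ D, Measurable ξ)
    (hDpos : ∀ ξ ∈ D, ∀ ω, 0 ≤ ξ ω)
    (hwtop : wDual μ H D < ⊤) :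
    ∀ y₁ y₂ : ℝ, 0 < y₁ → 0 < y₂ →
      |dualValue μ U H D y₁ - dualValue μ U H D y₂| ≤
        (wDual μ H D).toReal * |y₁ - y₂| := by
  intro y₁ y₂ hy₁ hy₂
  have one_sided : ∀ a b : ℝ, 0 < a → 0 < b →
      dualValue μ U H D a ≤ dualValue μ U H D b + (wDual μ H D).toReal * |a - b| :=
    fun a b ha hb => dualValue_le_add hHmeas hHpos (fun ω => hU0 ω 0 le_rfl) hUmono hUcont
      hUmeas hUint hwtop.ne hDne hDmeas hDpos ha.le hb.le
  rw [abs_sub_le_iff]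
  constructor
  · linarith [one_sided y₁ y₂ hy₁ hy₂]
  · linarith [abs_sub_comm y₂ y₁ ▸ one_sided y₂ y₁ hy₂ hy₁]

/-- If `0 < w_D < ∞`, then the dual value function `v` is `w_D`-Lipschitz on
`(0,∞)`: `|v(y₁) − v(y₂)| ≤ w_D·|y₁ − y₂|` for all `y₁, y₂ > 0`. -/
theorem stmt7 {Ω : Type*} [MeasurableSpace Ω] (μ : Measure Ω) [IsProbabilityMeasure μ]
    (H : Ω → ℝ) (hHmeas : Measurable H) (hHpos : ∀ ω, 0 < H ω)
    (U : Ω → ℝ → ℝ)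
    (hU0 : ∀ ω, ∀ z, 0 ≤ z → 0 ≤ U ω z)
    (hUmono : ∀ ω, MonotoneOn (U ω) (Set.Ici 0))
    (hUcont : ∀ ω, ContinuousOn (U ω) (Set.Ici 0))
    (hUconc : ∀ ω, StrictConcaveOn ℝ (Set.Ioo 0 (H ω)) (U ω))
    (hUdiff : ∀ ω, ∀ z ∈ Set.Ioo 0 (H ω), DifferentiableAt ℝ (U ω) z)
    (hUcap : ∀ ω, ∀ w, 0 ≤ w → U ω w = U ω (min w (H ω)))
    (hUmeas : ∀ z, Measurable fun ω => U ω z)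
    (hUint : Integrable (fun ω => U ω (H ω)) μ)
    (D : Set (Ω → ℝ)) (hDne : D.Nonempty)
    (hDmeas : ∀ ξ ∈ D, Measurable ξ)
    (hDpos : ∀ ξ ∈ D, ∀ ω, 0 ≤ ξ ω)
    (hw0 : 0 < wDual μ H D) (hwtop : wDual μ H D < ⊤) :
    ∀ y₁ y₂ : ℝ, 0 < y₁ → 0 < y₂ →
      |dualValue μ U H D y₁ - dualValue μ U H D y₂| ≤
        (wDual μ H D).toReal * |y₁ - y₂| :=
  stmt7_general μ H hHmeas hHpos U hU0 hUmono hUcont hUmeas hUint D hDne hDmeas hDpos hwtop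
end

section
/- If D is convex (i.e., λξ₁ + (1−λ)ξ₂ ∈ D whenever ξ₁, ξ₂ ∈ D and λ ∈ [0,1]), then the dual value function v is convex on (0,∞). -/
open MeasureTheory Set Filter
open scoped ENNReal NNReal Topology

private lemma dualU_ub {U : ℝ → ℝ} {H c : ℝ} (hH : 0 ≤ H)
    (hmono : MonotoneOn U (Set.Ici 0)) (hc : 0 ≤ c) :
    ∀ w ∈ (fun z => U z - c * z) '' Set.Icc 0 H, w ≤ U H := by
  rintro w ⟨z, ⟨hz0, hzH⟩, rfl⟩
  have h1 : U z ≤ U H := hmono (Set.mem_Ici.mpr hz0) (Set.mem_Ici.mpr hH) hzH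
  simp only
  nlinarith [mul_nonneg hc hz0]

private lemma dualU_bdd {U : ℝ → ℝ} {H c : ℝ} (hH : 0 ≤ H)
    (hmono : MonotoneOn U (Set.Ici 0)) (hc : 0 ≤ c) :
    BddAbove ((fun z => U z - c * z) '' Set.Icc 0 H) :=
  ⟨U H, dualU_ub hH hmono hc⟩

private lemma dualU_nonneg {U : ℝ → ℝ} {H c : ℝ} (hH : 0 ≤ H) (hU0 : 0 ≤ U 0)
    (hmono : MonotoneOn U (Set.Ici 0)) (hc : 0 ≤ c) : 0 ≤ dualU U H c := by
  have := le_csSup (dualU_bdd hH hmono hc) (⟨0, ⟨le_rfl, hH⟩, by simp⟩ :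
    U 0 ∈ (fun z => U z - c * z) '' Set.Icc 0 H)
  exact le_trans hU0 this

private lemma dualU_le {U : ℝ → ℝ} {H c : ℝ} (hH : 0 ≤ H) (hU0 : 0 ≤ U 0)
    (hmono : MonotoneOn U (Set.Ici 0)) (hc : 0 ≤ c) : dualU U H c ≤ U H :=
  Real.sSup_le (dualU_ub hH hmono hc)
    (le_trans hU0 (hmono (Set.mem_Ici.mpr le_rfl) (Set.mem_Ici.mpr hH) hH))

private lemma dualU_convex {U : ℝ → ℝ} {H : ℝ} (hH : 0 ≤ H) (hU0 : 0 ≤ U 0)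
    (hmono : MonotoneOn U (Set.Ici 0)) {c₁ c₂ a b : ℝ}
    (hc₁ : 0 ≤ c₁) (hc₂ : 0 ≤ c₂) (ha : 0 ≤ a) (hb : 0 ≤ b) (hab : a + b = 1) :
    dualU U H (a * c₁ + b * c₂) ≤ a * dualU U H c₁ + b * dualU U H c₂ := by
  apply Real.sSup_le
  · rintro w ⟨z, hz, rfl⟩
    have h1 : U z - c₁ * z ≤ dualU U H c₁ := le_csSup (dualU_bdd hH hmono hc₁) ⟨z, hz, rfl⟩
    have h2 : U z - c₂ * z ≤ dualU U H c₂ := le_csSup (dualU_bdd hH hmono hc₂) ⟨z, hz, rfl⟩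
    simp only
    have e : U z - (a * c₁ + b * c₂) * z = a * (U z - c₁ * z) + b * (U z - c₂ * z) := by
      linear_combination (-(U z)) * hab
    have m1 := mul_le_mul_of_nonneg_left h1 ha
    have m2 := mul_le_mul_of_nonneg_left h2 hb
    linarith
  · have n1 := dualU_nonneg hH hU0 hmono hc₁
    have n2 := dualU_nonneg hH hU0 hmono hc₂
    positivity

private lemma dualU_eq_iSup {U : ℝ → ℝ} {H c : ℝ} (hH : 0 ≤ H)
    (hmono : MonotoneOn U (Set.Ici 0)) (hcont : ContinuousOn U (Set.Ici 0)) (hc : 0 ≤ c) :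
    dualU U H c = ⨆ q : ℚ, (U (min (max (q : ℝ) 0) H) - c * min (max (q : ℝ) 0) H) := by
  set g : ℝ → ℝ := fun z => U z - c * z with hg_def
  set proj : ℝ → ℝ := fun x => min (max x 0) H with hproj_def
  have hproj_cont : Continuous proj := (continuous_id.max continuous_const).min continuous_const
  have hproj_mem : ∀ x, proj x ∈ Set.Icc 0 H :=
    fun x => ⟨le_min (le_max_right _ _) hH, min_le_right _ _⟩
  set T : Set ℝ := Set.range (fun q : ℚ => g (proj (q : ℝ))) with hT_def
  have hTS : T ⊆ g '' Set.Icc 0 H := by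
    rintro w ⟨q, rfl⟩; exact ⟨proj (q : ℝ), hproj_mem _, rfl⟩
  have bddS : BddAbove (g '' Set.Icc 0 H) := dualU_bdd hH hmono hc
  have bddT : BddAbove T := bddS.mono hTS
  have Tne : T.Nonempty := Set.range_nonempty _
  have hclR : closure (Set.range (fun q : ℚ => proj (q : ℝ))) = Set.Icc 0 H := by
    apply Subset.antisymm
    · exact closure_minimal (by rintro w ⟨q, rfl⟩; exact hproj_mem _) isClosed_Icc
    · intro z hz
      have hz' : z ∈ closure (Set.range ((↑) : ℚ → ℝ)) := Rat.denseRange_cast z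
      have : proj z ∈ closure (proj '' Set.range ((↑) : ℚ → ℝ)) :=
        image_closure_subset_closure_image hproj_cont ⟨z, hz', rfl⟩
      have hpz : proj z = z := by
        simp only [hproj_def]
        rw [max_eq_left hz.1, min_eq_left hz.2]
      rw [hpz] at this
      convert this using 2
      rw [← Set.range_comp]; rfl
  have hgc : ContinuousOn g (Set.Icc 0 H) :=
    ((hcont.mono (fun x hx => hx.1)).sub ((continuous_const.mul continuous_id).continuousOn))
  have hSclT : g '' Set.Icc 0 H ⊆ closure T := by
    rw [← hclR]
    refine subset_trans (ContinuousOn.image_closure (by rw [hclR]; exact hgc)) ?_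
    apply closure_mono
    rintro w ⟨x, ⟨q, rfl⟩, rfl⟩; exact ⟨q, rfl⟩
  have le₁ : sSup T ≤ sSup (g '' Set.Icc 0 H) := csSup_le_csSup bddS Tne hTS
  have le₂ : sSup (g '' Set.Icc 0 H) ≤ sSup T := by
    apply csSup_le (⟨g 0, ⟨0, ⟨le_rfl, hH⟩, rfl⟩⟩ : (g '' Set.Icc 0 H).Nonempty)
    intro x hx
    have : x ∈ closure (Set.Iic (sSup T)) :=
      closure_mono (fun t ht => le_csSup bddT ht) (hSclT hx)
    rwa [closure_Iic] at this
  rw [iSup]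
  exact le_antisymm le₂ le₁

private lemma dualU_measurable {Ω : Type*} [MeasurableSpace Ω] {H : Ω → ℝ} (hHmeas : Measurable H)
    (hHpos : ∀ ω, 0 < H ω) {U : Ω → ℝ → ℝ}
    (hUmono : ∀ ω, MonotoneOn (U ω) (Set.Ici 0))
    (hUcont : ∀ ω, ContinuousOn (U ω) (Set.Ici 0))
    (hUmeas : ∀ z, Measurable fun ω => U ω z)
    {c : Ω → ℝ} (hc : Measurable c) (hcpos : ∀ ω, 0 ≤ c ω) :
    Measurable fun ω => dualU (U ω) (H ω) (c ω) := by
  have key : (fun ω => dualU (U ω) (H ω) (c ω)) = fun ω =>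
      ⨆ q : ℚ, (U ω (min (max (q : ℝ) 0) (H ω)) - c ω * min (max (q : ℝ) 0) (H ω)) := by
    funext ω
    exact dualU_eq_iSup (hHpos ω).le (hUmono ω) (hUcont ω) (hcpos ω)
  rw [key]
  have hu : Measurable (Function.uncurry fun (z : ℝ) (ω : Ω) => U ω (max z 0)) := by
    apply measurable_uncurry_of_continuous_of_measurable
    · intro ω
      exact (hUcont ω).comp_continuous (continuous_id.max continuous_const)
        (fun z => Set.mem_Ici.mpr (le_max_right _ _))
    · intro z; exact hUmeas (max z 0)
  apply Measurable.iSup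
  intro q
  have hzq : Measurable fun ω => min (max (q : ℝ) 0) (H ω) := measurable_const.min hHmeas
  have hzq0 : ∀ ω, 0 ≤ min (max (q : ℝ) 0) (H ω) :=
    fun ω => le_min (le_max_right _ _) (hHpos ω).le
  have hU' : Measurable fun ω => U ω (min (max (q : ℝ) 0) (H ω)) := by
    have h2 : (fun ω => U ω (min (max (q : ℝ) 0) (H ω))) = fun ω =>
        Function.uncurry (fun (z : ℝ) (ω : Ω) => U ω (max z 0)) (min (max (q : ℝ) 0) (H ω), ω) := by
      funext ω
      simp only [Function.uncurry]
      rw [max_eq_left (hzq0 ω)]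
    rw [h2]
    exact hu.comp (hzq.prodMk measurable_id)
  exact hU'.sub (hc.mul hzq)

private lemma dualU_integrable {Ω : Type*} [MeasurableSpace Ω] (μ : Measure Ω)
    {H : Ω → ℝ} (hHmeas : Measurable H) (hHpos : ∀ ω, 0 < H ω) {U : Ω → ℝ → ℝ}
    (hU0 : ∀ ω, ∀ z, 0 ≤ z → 0 ≤ U ω z)
    (hUmono : ∀ ω, MonotoneOn (U ω) (Set.Ici 0))
    (hUcont : ∀ ω, ContinuousOn (U ω) (Set.Ici 0))
    (hUmeas : ∀ z, Measurable fun ω => U ω z)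
    (hUint : Integrable (fun ω => U ω (H ω)) μ)
    {c : Ω → ℝ} (hc : Measurable c) (hcpos : ∀ ω, 0 ≤ c ω) :
    Integrable (fun ω => dualU (U ω) (H ω) (c ω)) μ := by
  apply Integrable.mono hUint
    ((dualU_measurable hHmeas hHpos hUmono hUcont hUmeas hc hcpos).aestronglyMeasurable)
  filter_upwards with ω
  rw [Real.norm_eq_abs, Real.norm_eq_abs,
    abs_of_nonneg (dualU_nonneg (hHpos ω).le (hU0 ω 0 le_rfl) (hUmono ω) (hcpos ω)),
    abs_of_nonneg (hU0 ω (H ω) (hHpos ω).le)]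
  exact dualU_le (hHpos ω).le (hU0 ω 0 le_rfl) (hUmono ω) (hcpos ω)

set_option linter.unusedVariables false in
/-- If `D` is convex, then the dual value function `v` is convex on `(0,∞)`. -/
theorem stmt9 {Ω : Type*} [MeasurableSpace Ω] (μ : Measure Ω) [IsProbabilityMeasure μ]
    (H : Ω → ℝ) (hHmeas : Measurable H) (hHpos : ∀ ω, 0 < H ω)
    (U : Ω → ℝ → ℝ)
    (hU0 : ∀ ω, ∀ z, 0 ≤ z → 0 ≤ U ω z)
    (hUmono : ∀ ω, MonotoneOn (U ω) (Set.Ici 0))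
    (hUcont : ∀ ω, ContinuousOn (U ω) (Set.Ici 0))
    (hUconc : ∀ ω, StrictConcaveOn ℝ (Set.Ioo 0 (H ω)) (U ω))
    (hUdiff : ∀ ω, ∀ z ∈ Set.Ioo 0 (H ω), DifferentiableAt ℝ (U ω) z)
    (hUcap : ∀ ω, ∀ w, 0 ≤ w → U ω w = U ω (min w (H ω)))
    (hUmeas : ∀ z, Measurable fun ω => U ω z)
    (hUint : Integrable (fun ω => U ω (H ω)) μ)
    (D : Set (Ω → ℝ)) (hDne : D.Nonempty)
    (hDmeas : ∀ ξ ∈ D, Measurable ξ)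
    (hDpos : ∀ ξ ∈ D, ∀ ω, 0 ≤ ξ ω)
    (hDconv : ∀ ξ₁ ∈ D, ∀ ξ₂ ∈ D, ∀ l : ℝ, 0 ≤ l → l ≤ 1 →
      (fun ω => l * ξ₁ ω + (1 - l) * ξ₂ ω) ∈ D) :
    ConvexOn ℝ (Set.Ioi 0) (dualValue μ U H D) := by
  have hH0 : ∀ ω, (0:ℝ) ≤ H ω := fun ω => (hHpos ω).le
  have hint : ∀ y : ℝ, 0 ≤ y → ∀ ξ ∈ D,
      Integrable (fun ω => dualU (U ω) (H ω) (y * ξ ω)) μ := by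
    intro y hy ξ hξ
    exact dualU_integrable μ hHmeas hHpos hU0 hUmono hUcont hUmeas hUint
      (measurable_const.mul (hDmeas ξ hξ)) (fun ω => mul_nonneg hy (hDpos ξ hξ ω))
  have hvn : ∀ y : ℝ, 0 ≤ y → ∀ ξ ∈ D,
      0 ≤ ∫ ω, dualU (U ω) (H ω) (y * ξ ω) ∂μ := by
    intro y hy ξ hξ
    exact integral_nonneg fun ω =>
      dualU_nonneg (hH0 ω) (hU0 ω 0 le_rfl) (hUmono ω) (mul_nonneg hy (hDpos ξ hξ ω))
  have hbdd : ∀ y : ℝ, 0 ≤ y →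
      BddBelow ((fun ξ => ∫ ω, dualU (U ω) (H ω) (y * ξ ω) ∂μ) '' D) := by
    intro y hy
    exact ⟨0, by rintro x ⟨ξ, hξ, rfl⟩; exact hvn y hy ξ hξ⟩
  have hSne : ∀ y : ℝ,
      ((fun ξ => ∫ ω, dualU (U ω) (H ω) (y * ξ ω) ∂μ) '' D).Nonempty :=
    fun y => hDne.image _
  refine ⟨convex_Ioi 0, ?_⟩
  intro y₁ hy₁ y₂ hy₂ a b ha hb hab
  simp only [smul_eq_mul]
  rcases eq_or_lt_of_le ha with rfl|ha'
  · have hb1 : b = 1 := by linarith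
    simp [hb1]
  rcases eq_or_lt_of_le hb with rfl|hb'
  · have ha1 : a = 1 := by linarith
    simp [ha1]
  have hy₁' : (0:ℝ) < y₁ := hy₁
  have hy₂' : (0:ℝ) < y₂ := hy₂
  set y : ℝ := a * y₁ + b * y₂ with hy_def
  have hy : 0 < y := add_pos (mul_pos ha' hy₁') (mul_pos hb' hy₂')
  have key : ∀ ξ₁ ∈ D, ∀ ξ₂ ∈ D, dualValue μ U H D y ≤
      a * ∫ ω, dualU (U ω) (H ω) (y₁ * ξ₁ ω) ∂μ
      + b * ∫ ω, dualU (U ω) (H ω) (y₂ * ξ₂ ω) ∂μ := by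
    intro ξ₁ hξ₁ ξ₂ hξ₂
    set l : ℝ := a * y₁ / y with hl_def
    have hl0 : 0 ≤ l := by positivity
    have hl1 : l ≤ 1 := by
      rw [hl_def, div_le_one hy]
      nlinarith [mul_pos hb' hy₂']
    have hξD : (fun ω => l * ξ₁ ω + (1 - l) * ξ₂ ω) ∈ D := hDconv ξ₁ hξ₁ ξ₂ hξ₂ l hl0 hl1
    have h1 : y * l = a * y₁ := by
      rw [hl_def]; field_simp
    have h2 : y * (1 - l) = b * y₂ := by
      have : y * (1 - l) = y - y * l := by ring
      rw [this, h1]; rw [hy_def]; ring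
    have hcomb : ∀ ω, y * (l * ξ₁ ω + (1 - l) * ξ₂ ω)
        = a * (y₁ * ξ₁ ω) + b * (y₂ * ξ₂ ω) := by
      intro ω
      have e : y * (l * ξ₁ ω + (1 - l) * ξ₂ ω)
          = (y * l) * ξ₁ ω + (y * (1 - l)) * ξ₂ ω := by ring
      rw [e, h1, h2]; ring
    have hpt : ∀ ω, dualU (U ω) (H ω) (y * (l * ξ₁ ω + (1 - l) * ξ₂ ω)) ≤
        a * dualU (U ω) (H ω) (y₁ * ξ₁ ω) + b * dualU (U ω) (H ω) (y₂ * ξ₂ ω) := by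
      intro ω
      rw [hcomb ω]
      exact dualU_convex (hH0 ω) (hU0 ω 0 le_rfl) (hUmono ω)
        (mul_nonneg hy₁'.le (hDpos ξ₁ hξ₁ ω)) (mul_nonneg hy₂'.le (hDpos ξ₂ hξ₂ ω))
        ha'.le hb'.le hab
    have i0 := hint y hy.le _ hξD
    have i1 := hint y₁ hy₁'.le ξ₁ hξ₁
    have i2 := hint y₂ hy₂'.le ξ₂ hξ₂
    have hle : (∫ ω, dualU (U ω) (H ω) (y * (l * ξ₁ ω + (1 - l) * ξ₂ ω)) ∂μ) ≤
        a * ∫ ω, dualU (U ω) (H ω) (y₁ * ξ₁ ω) ∂μ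
        + b * ∫ ω, dualU (U ω) (H ω) (y₂ * ξ₂ ω) ∂μ := by
      have hmono := integral_mono i0 ((i1.const_mul a).add (i2.const_mul b)) hpt
      simp only [Pi.add_apply] at hmono
      rwa [integral_add (i1.const_mul a) (i2.const_mul b),
        integral_const_mul, integral_const_mul] at hmono
    exact le_trans (csInf_le (hbdd y hy.le) ⟨_, hξD, rfl⟩) hle
  have step1 : ∀ ξ₂ ∈ D, dualValue μ U H D y ≤ a * dualValue μ U H D y₁
      + b * ∫ ω, dualU (U ω) (H ω) (y₂ * ξ₂ ω) ∂μ := by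
    intro ξ₂ hξ₂
    have h1 : (dualValue μ U H D y - b * ∫ ω, dualU (U ω) (H ω) (y₂ * ξ₂ ω) ∂μ) / a
        ≤ dualValue μ U H D y₁ := by
      apply le_csInf (hSne y₁)
      rintro x₁ ⟨ξ₁, hξ₁, rfl⟩
      rw [div_le_iff₀ ha']
      have := key ξ₁ hξ₁ ξ₂ hξ₂
      simp only at this ⊢
      linarith
    rw [div_le_iff₀ ha'] at h1
    linarith
  have h3 : (dualValue μ U H D y - a * dualValue μ U H D y₁) / b
      ≤ dualValue μ U H D y₂ := by
    apply le_csInf (hSne y₂)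
    rintro x₂ ⟨ξ₂, hξ₂, rfl⟩
    rw [div_le_iff₀ hb']
    have := step1 ξ₂ hξ₂
    simp only at this ⊢
    linarith
  rw [div_le_iff₀ hb'] at h3
  linarith
end

section
/- Weak duality: for every y ≥ 0, every z ≥ 0, every nonnegative F-measurable random variable V, and every nonnegative F-measurable random variable ξ satisfying E[ξ·min(V,H)] ≤ z, it holds that E[U(V(·),·)] ≤ E[Ũ(y·ξ(·),·)] + z·y. -/
open MeasureTheory Set Filter
open scoped ENNReal NNReal Topology

/-!
Pointwise, `U(V) = U(min(V, H)) ≤ Ũ(yξ) + yξ·min(V, H)` is the Fenchel inequality for the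
dual `Ũ`; integrating and using the budget constraint `E[ξ·min(V, H)] ≤ z` gives the claim.
The only real work is measurability of `ω ↦ Ũ(yξ(ω), ω)`: by continuity of `U`, the supremum
defining `Ũ` may be taken over the countably many points `max 0 (min q H)`, `q ∈ ℚ`.
-/

lemma sSup_image_Icc_eq_iSup_rat {f : ℝ → ℝ} {a b : ℝ} (hab : a ≤ b)
    (hf : ContinuousOn f (Icc a b)) :
    sSup (f '' Icc a b) = ⨆ q : ℚ, f (max a (min q b)) := by
  have hclamp : ∀ t : ℝ, max a (min t b) ∈ Icc a b := fun t =>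
    ⟨le_max_left _ _, max_le hab (min_le_right _ _)⟩
  have hF : Continuous fun t : ℝ => f (max a (min t b)) :=
    hf.comp_continuous (continuous_const.max (continuous_id.min continuous_const)) hclamp
  have hbdd : BddAbove (f '' Icc a b) := (isCompact_Icc.image_of_continuousOn hf).bddAbove
  have hbdd_rat : BddAbove (range fun q : ℚ => f (max a (min q b))) :=
    hbdd.mono (range_subset_iff.mpr fun q => mem_image_of_mem f (hclamp q))
  refine le_antisymm (csSup_le ((nonempty_Icc.mpr hab).image f) ?_)
    (ciSup_le fun q => le_csSup hbdd (mem_image_of_mem f (hclamp q)))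
  rintro _ ⟨x, hx, rfl⟩
  have hle : f (max a (min x b)) ≤ ⨆ q : ℚ, f (max a (min q b)) :=
    Rat.denseRange_cast.induction_on (p := fun t => f (max a (min t b)) ≤ _) x
      (isClosed_le hF continuous_const) (le_ciSup hbdd_rat)
  rwa [min_eq_left hx.2, max_eq_right hx.1] at hle

section dualU

variable {u : ℝ → ℝ} {H y x : ℝ}

lemma bddAbove_image_Icc_sub_mul (hu : ContinuousOn u (Icc 0 H)) :
    BddAbove ((fun z => u z - y * z) '' Icc 0 H) :=
  (isCompact_Icc.image_of_continuousOn
    (hu.sub (continuousOn_const.mul continuousOn_id))).bddAbove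

lemma sub_mul_le_dualU_s10 (hu : ContinuousOn u (Icc 0 H)) (hx : x ∈ Icc 0 H) :
    u x - y * x ≤ dualU u H y :=
  le_csSup (bddAbove_image_Icc_sub_mul hu) (mem_image_of_mem _ hx)

lemma dualU_nonneg_s10 (hu : ContinuousOn u (Icc 0 H)) (hH : 0 ≤ H) (hu0 : 0 ≤ u 0) :
    0 ≤ dualU u H y := by
  have h0 := sub_mul_le_dualU_s10 (y := y) hu ⟨le_rfl, hH⟩
  rw [mul_zero, sub_zero] at h0
  exact hu0.trans h0

lemma dualU_le_s10 (hH : 0 ≤ H) (hmono : MonotoneOn u (Icc 0 H)) (hy : 0 ≤ y) :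
    dualU u H y ≤ u H := by
  refine csSup_le ((nonempty_Icc.mpr hH).image _) ?_
  rintro _ ⟨x, hx, rfl⟩
  have hux : u x ≤ u H := hmono hx (right_mem_Icc.mpr hH) hx.2
  nlinarith [mul_nonneg hy hx.1]

lemma dualU_eq_iSup_rat_s10 (hH : 0 ≤ H) (hu : ContinuousOn u (Icc 0 H)) :
    dualU u H y = ⨆ q : ℚ, (u (max 0 (min (q : ℝ) H)) - y * max 0 (min (q : ℝ) H)) :=
  sSup_image_Icc_eq_iSup_rat hH (hu.sub (continuousOn_const.mul continuousOn_id))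

end dualU

section Measurability

variable {Ω : Type*} [MeasurableSpace Ω] {U : Ω → ℝ → ℝ}

lemma measurable_apply_of_continuousOn_Ici (hcont : ∀ ω, ContinuousOn (U ω) (Ici 0))
    (hmeas : ∀ z, Measurable fun ω => U ω z) {W : Ω → ℝ} (hW : Measurable W)
    (hW0 : ∀ ω, 0 ≤ W ω) :
    Measurable fun ω => U ω (W ω) := by
  have hext : ∀ ω, Continuous fun t => U ω (max t 0) := fun ω =>
    (hcont ω).comp_continuous (continuous_id.max continuous_const) fun t => le_max_right t 0
  have hjoint : Measurable (Function.uncurry fun t ω => U ω (max t 0)) :=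
    measurable_uncurry_of_continuous_of_measurable hext fun t => hmeas _
  have hW_eq : (fun ω => U ω (W ω)) = fun ω => U ω (max (W ω) 0) :=
    funext fun ω => by rw [max_eq_left (hW0 ω)]
  rw [hW_eq]
  exact hjoint.comp (hW.prodMk measurable_id)

lemma measurable_dualU_s10 {H c : Ω → ℝ} (hH : Measurable H) (hH0 : ∀ ω, 0 ≤ H ω)
    (hcont : ∀ ω, ContinuousOn (U ω) (Ici 0)) (hmeas : ∀ z, Measurable fun ω => U ω z)
    (hc : Measurable c) :
    Measurable fun ω => dualU (U ω) (H ω) (c ω) := by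
  simp_rw [fun ω => dualU_eq_iSup_rat_s10 (y := c ω) (hH0 ω) ((hcont ω).mono Icc_subset_Ici_self)]
  have hclamp : ∀ q : ℚ, Measurable fun ω => max 0 (min (q : ℝ) (H ω)) := fun q =>
    measurable_const.max (measurable_const.min hH)
  exact Measurable.iSup fun q =>
    (measurable_apply_of_continuousOn_Ici hcont hmeas (hclamp q) fun ω => le_max_left _ _).sub
      (hc.mul (hclamp q))

lemma integrable_dualU_s10 {μ : Measure Ω} {H c : Ω → ℝ} (hH : Measurable H) (hH0 : ∀ ω, 0 ≤ H ω)
    (hU0 : ∀ ω, 0 ≤ U ω 0) (hmono : ∀ ω, MonotoneOn (U ω) (Ici 0))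
    (hcont : ∀ ω, ContinuousOn (U ω) (Ici 0)) (hmeas : ∀ z, Measurable fun ω => U ω z)
    (hint : Integrable (fun ω => U ω (H ω)) μ) (hc : Measurable c) (hc0 : ∀ ω, 0 ≤ c ω) :
    Integrable (fun ω => dualU (U ω) (H ω) (c ω)) μ := by
  refine hint.mono' (measurable_dualU_s10 hH hH0 hcont hmeas hc).aestronglyMeasurable
    (.of_forall fun ω => ?_)
  rw [Real.norm_of_nonneg (dualU_nonneg_s10 ((hcont ω).mono Icc_subset_Ici_self) (hH0 ω) (hU0 ω))]
  exact dualU_le_s10 (hH0 ω) ((hmono ω).mono Icc_subset_Ici_self) (hc0 ω)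

end Measurability

lemma integrable_and_integral_le_of_lintegral_ofReal_le {Ω : Type*} [MeasurableSpace Ω]
    {μ : Measure Ω} {f : Ω → ℝ} {z : ℝ} (hf : AEStronglyMeasurable f μ) (hf0 : 0 ≤ᵐ[μ] f)
    (hz : 0 ≤ z) (h : ∫⁻ ω, ENNReal.ofReal (f ω) ∂μ ≤ ENNReal.ofReal z) :
    Integrable f μ ∧ ∫ ω, f ω ∂μ ≤ z :=
  ⟨⟨hf, (hasFiniteIntegral_iff_ofReal hf0).mpr (h.trans_lt ENNReal.ofReal_lt_top)⟩,
    by rw [integral_eq_lintegral_of_nonneg_ae hf0 hf]; exact ENNReal.toReal_le_of_le_ofReal hz h⟩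

theorem stmt10_general {Ω : Type*} [MeasurableSpace Ω] (μ : Measure Ω)
    (H : Ω → ℝ) (hHmeas : Measurable H) (hHpos : ∀ ω, 0 < H ω)
    (U : Ω → ℝ → ℝ)
    (hU0 : ∀ ω, ∀ z, 0 ≤ z → 0 ≤ U ω z)
    (hUmono : ∀ ω, MonotoneOn (U ω) (Set.Ici 0))
    (hUcont : ∀ ω, ContinuousOn (U ω) (Set.Ici 0))
    (hUcap : ∀ ω, ∀ w, 0 ≤ w → U ω w = U ω (min w (H ω)))
    (hUmeas : ∀ z, Measurable fun ω => U ω z)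
    (hUint : Integrable (fun ω => U ω (H ω)) μ)
    (y z : ℝ) (hy : 0 ≤ y) (hz : 0 ≤ z)
    (V : Ω → ℝ) (hVmeas : Measurable V) (hVpos : ∀ ω, 0 ≤ V ω)
    (ξ : Ω → ℝ) (hξmeas : Measurable ξ) (hξpos : ∀ ω, 0 ≤ ξ ω)
    (hbudget : (∫⁻ ω, ENNReal.ofReal (ξ ω * min (V ω) (H ω)) ∂μ) ≤
      ENNReal.ofReal z) :
    (∫ ω, U ω (V ω) ∂μ) ≤ (∫ ω, dualU (U ω) (H ω) (y * ξ ω) ∂μ) + z * y := by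
  have hmin : ∀ ω, min (V ω) (H ω) ∈ Icc 0 (H ω) := fun ω =>
    ⟨le_min (hVpos ω) (hHpos ω).le, min_le_right _ _⟩
  have hdual_int : Integrable (fun ω => dualU (U ω) (H ω) (y * ξ ω)) μ :=
    integrable_dualU_s10 hHmeas (fun ω => (hHpos ω).le) (fun ω => hU0 ω 0 le_rfl) hUmono hUcont
      hUmeas hUint (hξmeas.const_mul y) fun ω => mul_nonneg hy (hξpos ω)
  obtain ⟨hcost_int, hcost_le⟩ := integrable_and_integral_le_of_lintegral_ofReal_le
    (f := fun ω => ξ ω * min (V ω) (H ω))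
    (hξmeas.mul (hVmeas.min hHmeas)).aestronglyMeasurable
    (.of_forall fun ω => mul_nonneg (hξpos ω) (hmin ω).1) hz hbudget
  have hfenchel : ∀ ω, U ω (V ω) ≤
      dualU (U ω) (H ω) (y * ξ ω) + y * (ξ ω * min (V ω) (H ω)) := fun ω => by
    have hF := sub_mul_le_dualU_s10 (y := y * ξ ω) ((hUcont ω).mono Icc_subset_Ici_self) (hmin ω)
    rw [hUcap ω (V ω) (hVpos ω)]
    linarith
  calc ∫ ω, U ω (V ω) ∂μ
      ≤ ∫ ω, (dualU (U ω) (H ω) (y * ξ ω) + y * (ξ ω * min (V ω) (H ω))) ∂μ :=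
        integral_mono_of_nonneg (.of_forall fun ω => hU0 ω _ (hVpos ω))
          (hdual_int.add (hcost_int.const_mul y)) (.of_forall hfenchel)
    _ ≤ (∫ ω, dualU (U ω) (H ω) (y * ξ ω) ∂μ) + z * y := by
        rw [integral_add hdual_int (hcost_int.const_mul y), integral_const_mul]
        linarith [mul_le_mul_of_nonneg_left hcost_le hy]

/-- Weak duality: for every `y ≥ 0`, `z ≥ 0`, every nonnegative measurable
`V`, and every nonnegative measurable `ξ` with `E[ξ·min(V,H)] ≤ z`, one has
`E[U(V(·),·)] ≤ E[Ũ(y·ξ(·),·)] + z·y`. -/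
theorem stmt10 {Ω : Type*} [MeasurableSpace Ω] (μ : Measure Ω) [IsProbabilityMeasure μ]
    (H : Ω → ℝ) (hHmeas : Measurable H) (hHpos : ∀ ω, 0 < H ω)
    (U : Ω → ℝ → ℝ)
    (hU0 : ∀ ω, ∀ z, 0 ≤ z → 0 ≤ U ω z)
    (hUmono : ∀ ω, MonotoneOn (U ω) (Set.Ici 0))
    (hUcont : ∀ ω, ContinuousOn (U ω) (Set.Ici 0))
    (hUconc : ∀ ω, StrictConcaveOn ℝ (Set.Ioo 0 (H ω)) (U ω))
    (hUdiff : ∀ ω, ∀ z ∈ Set.Ioo 0 (H ω), DifferentiableAt ℝ (U ω) z)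
    (hUcap : ∀ ω, ∀ w, 0 ≤ w → U ω w = U ω (min w (H ω)))
    (hUmeas : ∀ z, Measurable fun ω => U ω z)
    (hUint : Integrable (fun ω => U ω (H ω)) μ)
    (y z : ℝ) (hy : 0 ≤ y) (hz : 0 ≤ z)
    (V : Ω → ℝ) (hVmeas : Measurable V) (hVpos : ∀ ω, 0 ≤ V ω)
    (ξ : Ω → ℝ) (hξmeas : Measurable ξ) (hξpos : ∀ ω, 0 ≤ ξ ω)
    (hbudget : (∫⁻ ω, ENNReal.ofReal (ξ ω * min (V ω) (H ω)) ∂μ) ≤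
      ENNReal.ofReal z) :
    (∫ ω, U ω (V ω) ∂μ) ≤ (∫ ω, dualU (U ω) (H ω) (y * ξ ω) ∂μ) + z * y :=
  stmt10_general μ H hHmeas hHpos U hU0 hUmono hUcont hUcap hUmeas hUint y z hy hz V hVmeas hVpos ξ
    hξmeas hξpos hbudget
end
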